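/- Let G be a connected simple graph on n ≥ 3 vertices, let Tr_max(G) be its maximum transmission, and set R₁ = Σ_v Tr(v)² + 2·Σ_{u<v} d(u,v)². Then DLS(G) ≥ 1 + Tr_max(G) − sqrt((R₁ − (1 + Tr_max(G))²)/(n−2)), with equality if and only if G is the complete graph K_n. -/

import Mathlib

open Finset Matrix Polynomial

/-- The transmission `Tr(v)` of a vertex `v`: the sum of the distances from `v`
to all other vertices of the graph. -/
noncomputable def transm {n : ℕ} (G : SimpleGraph (Fin n)) (v : Fin n) : ℝ :=
  ∑ u : Fin n, (G.dist v u : ℝ)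

/-- The distance Laplacian matrix `D^L(G) = Diag(Tr) - D(G)` of a graph `G`. -/
noncomputable def distLap {n : ℕ} (G : SimpleGraph (Fin n)) : Matrix (Fin n) (Fin n) ℝ :=
  Matrix.diagonal (transm G) - Matrix.of (fun u v : Fin n => (G.dist u v : ℝ))

/-- `IsDLSpec G μ` says that `μ 0 , μ 1 , …, μ (n-1)` are exactly the eigenvalues
(with multiplicity) of the distance Laplacian matrix of `G`; combined with `Antitone μ`
this means `μ ⟨i-1,_⟩ = ∂_i^L(G)` in the usual decreasing ordering. -/
def IsDLSpec {n : ℕ} (G : SimpleGraph (Fin n)) (μ : Fin n → ℝ) : Prop :=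
  (distLap G).charpoly = ∏ i : Fin n, (X - C (μ i))

/-- The Wiener index `W(G) = (1/2) ∑_v Tr(v)`. -/
noncomputable def wiener {n : ℕ} (G : SimpleGraph (Fin n)) : ℝ :=
  (∑ v : Fin n, transm G v) / 2

/-- The maximum transmission `Tr_max(G) = max_v Tr(v)`. -/
noncomputable def trMax {n : ℕ} (G : SimpleGraph (Fin n)) : ℝ :=
  ⨆ v : Fin n, transm G v

/-- `R₁ = ∑_v Tr(v)² + 2 ∑_{u<v} d(u,v)²`. -/
noncomputable def R1 {n : ℕ} (G : SimpleGraph (Fin n)) : ℝ :=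
  ∑ v : Fin n, (transm G v) ^ 2 +
    2 * ∑ u : Fin n, ∑ v ∈ Finset.univ.filter (fun v : Fin n => u < v), (G.dist u v : ℝ) ^ 2

/-!
Let `L` be the distance Laplacian and `μ₀ ≥ ⋯ ≥ μₙ₋₁` its eigenvalues. They are nonnegative by
Gershgorin, since `L` is diagonally dominant, and `∑ μᵢ² = tr L² = R₁`. The rows and columns of `L`
sum to zero, so the Rayleigh quotient of `n • e_v - 𝟙` is `n Tr(v) / (n - 1)`; as `Tr(v) ≥ n - 1`
in a connected graph, this gives `μ₀ ≥ 1 + Tr_max`. Removing `μ₀²` and `μₙ₋₁²` from `R₁` leaves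
`n - 2` squares, each at least `μₙ₋₂²`, whence `μₙ₋₂ ≤ √((R₁ - (1 + Tr_max)²)/(n - 2))`.

Equality forces `μ₀ = 1 + Tr_max`, and then the Rayleigh bound gives `Tr_max ≤ n - 1`, so all
distances are `1`. Conversely `L(Kₙ) = n • 1 - J` satisfies `L² = n • L`, so its spectrum lies in
`{0, n}`, and the trace `n (n - 1)` forces `μ₀ = μₙ₋₂ = n`.
-/

namespace Matrix

variable {ι : Type*} [Fintype ι] [DecidableEq ι]

theorem spectrum_eq_range_of_charpoly_eq_prod {K : Type*} [Field K] {A : Matrix ι ι K}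
    {μ : ι → K} (hμ : A.charpoly = ∏ i, (X - C (μ i))) : spectrum K A = Set.range μ := by
  ext t
  rw [mem_spectrum_iff_isRoot_charpoly, hμ, isRoot_prod]
  simp [sub_eq_zero, eq_comm]

theorem trace_eq_sum_of_charpoly_eq_prod {K : Type*} [Field K] {A : Matrix ι ι K}
    {μ : ι → K} (hμ : A.charpoly = ∏ i, (X - C (μ i))) : A.trace = ∑ i, μ i := by
  have hsplits : A.charpoly.Splits := hμ ▸ Splits.prod fun i _ => Splits.X_sub_C (μ i)
  rw [trace_eq_sum_roots_charpoly_of_splits hsplits, hμ, roots_prod]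
  · simp
  · simp [Finset.prod_ne_zero_iff, X_sub_C_ne_zero]

theorem smul_single_sub_one_dotProduct_mulVec {R : Type*} [CommRing R] {A : Matrix ι ι R}
    (hrow : A *ᵥ 1 = 0) (hcol : 1 ᵥ* A = 0) (c : R) (v : ι) :
    (c • Pi.single v 1 - 1) ⬝ᵥ (A *ᵥ (c • Pi.single v 1 - 1)) = c ^ 2 * A v v := by
  have hcol_v : 1 ⬝ᵥ A.col v = 0 := congrFun hcol v
  simp [mulVec_sub, hrow, sub_dotProduct, mulVec_smul, hcol_v]
  ring

variable {A : Matrix ι ι ℝ}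

theorem IsHermitian.charpoly_cfc_eq_of_charpoly_eq_prod (hA : A.IsHermitian) {μ : ι → ℝ}
    (hμ : A.charpoly = ∏ i, (X - C (μ i))) (f : ℝ → ℝ) :
    (cfc f A).charpoly = ∏ i, (X - C (f (μ i))) := by
  have hroots : univ.val.map hA.eigenvalues = univ.val.map μ := by
    have := hA.roots_charpoly_eq_eigenvalues
    rw [hμ, roots_prod] at this
    · simpa using this.symm
    · simp [Finset.prod_ne_zero_iff, X_sub_C_ne_zero]
  rw [hA.charpoly_cfc_eq f]
  have := congrArg (fun s => (s.map fun t => X - C (f t)).prod) hroots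
  simp only [Multiset.map_map, Function.comp_def, ← Finset.prod_eq_multiset_prod] at this
  simpa using this

theorem IsHermitian.dotProduct_mulVec_le_of_spectrum_le (hA : A.IsHermitian) {c : ℝ}
    (hc : ∀ t ∈ spectrum ℝ A, t ≤ c) (x : ι → ℝ) : x ⬝ᵥ (A *ᵥ x) ≤ c * (x ⬝ᵥ x) := by
  have hpsd : (algebraMap ℝ _ c - A).PosSemidef := by
    refine posSemidef_iff_isHermitian_and_spectrum_nonneg.mpr ⟨(isHermitian_diagonal _).sub hA, ?_⟩
    rw [← spectrum.singleton_sub_eq]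
    rintro _ ⟨_, rfl, t, ht, rfl⟩
    simpa using hc t ht
  simpa [sub_mulVec, dotProduct_sub, algebraMap_eq_diagonal, Pi.algebraMap_def] using
    hpsd.dotProduct_mulVec_nonneg x

theorem nonneg_of_mem_spectrum_of_diagDominant
    (h : ∀ k, ∑ j ∈ univ.erase k, |A k j| ≤ A k k) {t : ℝ} (ht : t ∈ spectrum ℝ A) : 0 ≤ t := by
  rw [← spectrum_toLin', ← Module.End.hasEigenvalue_iff_mem_spectrum] at ht
  obtain ⟨k, hk⟩ := eigenvalue_mem_ball ht
  rw [Metric.mem_closedBall, Real.dist_eq] at hk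
  simp only [Real.norm_eq_abs] at hk
  linarith [h k, neg_abs_le (t - A k k)]

end Matrix

theorem spectrum.mul_self_eq_of_mul_self_eq_smul {K R : Type*} [Field K] [Ring R] [Algebra K R]
    [Nontrivial R] {a : R} {c : K} (ha : a * a = c • a) {t : K} (ht : t ∈ spectrum K a) :
    t * t = c * t := by
  have := spectrum.subset_polynomial_aeval a (X * X - C c * X) ⟨t, ht, rfl⟩
  simp only [eval_sub, eval_mul, eval_X, eval_C, map_sub, map_mul, aeval_X, aeval_C,
    ← Algebra.smul_def, ha, sub_self, spectrum.zero_eq, Set.mem_singleton_iff] at this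
  exact sub_eq_zero.mp this

theorem Finset.sum_sum_eq_two_nsmul_sum_sum_lt {α M : Type*} [Fintype α] [LinearOrder α]
    [AddCommMonoid M] {f : α → α → M} (hsymm : ∀ i j, f i j = f j i) (hdiag : ∀ i, f i i = 0) :
    ∑ i, ∑ j, f i j = 2 • ∑ i, ∑ j ∈ univ.filter (i < ·), f i j := by
  have hsplit : ∀ i j, (if i < j then f i j else 0) + (if j < i then f j i else 0) = f i j := by
    intro i j
    rcases lt_trichotomy i j with h | rfl | h
    · simp [h, h.not_gt]
    · simp [hdiag]
    · simp [h, h.not_gt, hsymm i j]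
  calc ∑ i, ∑ j, f i j
      = ∑ i, ∑ j, (if i < j then f i j else 0) + ∑ i, ∑ j, (if j < i then f j i else 0) := by
        simp only [← sum_add_distrib, hsplit]
    _ = 2 • ∑ i, ∑ j ∈ univ.filter (i < ·), f i j := by
        rw [sum_comm (f := fun i j => if j < i then f j i else 0), ← two_nsmul]
        simp_rw [sum_filter]

theorem Finset.add_add_card_sub_two_mul_le_sum {α : Type*} [Fintype α] [DecidableEq α]
    {f : α → ℝ} {a b : α} (hab : a ≠ b) {c : ℝ} (hc : ∀ i, i ≠ a → i ≠ b → c ≤ f i) :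
    f a + f b + (Fintype.card α - 2) * c ≤ ∑ i, f i := by
  rw [← sum_add_sum_compl {a, b} f, sum_pair hab]
  have hcard : ((({a, b} : Finset α)ᶜ).card : ℝ) = Fintype.card α - 2 := by
    rw [card_compl, card_pair hab, Nat.cast_sub (card_pair hab ▸ card_le_univ _)]
    norm_num
  have := card_nsmul_le_sum ({a, b}ᶜ) f c fun i hi => by
    simp only [mem_compl, mem_insert, mem_singleton, not_or] at hi
    exact hc i hi.1 hi.2
  rw [nsmul_eq_mul, hcard] at this
  linarith

theorem penultimate_le_sqrt_of_antitone {n : ℕ} (hn : 2 < n) {μ : Fin n → ℝ} (hμ : Antitone μ)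
    (hnonneg : ∀ i, 0 ≤ μ i) {a : ℝ} (ha : 0 ≤ a) (haμ : a ≤ μ ⟨0, by omega⟩) :
    μ ⟨n - 2, by omega⟩ ≤ √((∑ i, μ i ^ 2 - a ^ 2) / (n - 2)) := by
  have hn' : (2 : ℝ) < n := by exact_mod_cast hn
  have hsum := add_add_card_sub_two_mul_le_sum (f := fun i => μ i ^ 2)
    (a := ⟨0, by omega⟩) (b := ⟨n - 1, by omega⟩) (by simp [Fin.ext_iff]; omega)
    (c := μ ⟨n - 2, by omega⟩ ^ 2) fun i _ hi => by
      have : i ≤ ⟨n - 2, by omega⟩ := by simp [Fin.ext_iff, Fin.le_def] at hi ⊢; omega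
      exact pow_le_pow_left₀ (hnonneg _) (hμ this) 2
  simp only [Fintype.card_fin] at hsum
  apply Real.le_sqrt_of_sq_le
  rw [le_div_iff₀ (by linarith)]
  nlinarith [pow_le_pow_left₀ ha haμ 2, sq_nonneg (μ ⟨n - 1, by omega⟩)]

theorem SimpleGraph.Connected.dist_top_le {V : Type*} {G : SimpleGraph V} (hG : G.Connected)
    (u v : V) : (⊤ : SimpleGraph V).dist u v ≤ G.dist u v := by
  classical
  rw [SimpleGraph.dist_top]
  split_ifs with h
  · exact Nat.zero_le _
  · exact hG.pos_dist_of_ne h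

section Transmission

variable {n : ℕ} {G : SimpleGraph (Fin n)}

theorem transm_top (v : Fin n) : transm ⊤ v = n - 1 := by
  simp [transm, SimpleGraph.dist_top, Finset.sum_ite, Finset.filter_ne, Nat.cast_pred v.pos]

theorem transm_top_le_transm (hG : G.Connected) (v : Fin n) : transm ⊤ v ≤ transm G v :=
  sum_le_sum fun u _ => by exact_mod_cast hG.dist_top_le v u

theorem eq_top_of_transm_le_transm_top (hG : G.Connected) (h : ∀ v, transm G v ≤ transm ⊤ v) :
    G = ⊤ := by
  ext u v
  refine ⟨fun huv => huv.ne, fun huv => ?_⟩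
  have hle : ∀ w ∈ univ, ((⊤ : SimpleGraph (Fin n)).dist u w : ℝ) ≤ G.dist u w :=
    fun w _ => by exact_mod_cast hG.dist_top_le u w
  have hdist := (sum_eq_sum_iff_of_le hle).mp
    (le_antisymm (transm_top_le_transm hG u) (h u)) v (mem_univ v)
  rw [SimpleGraph.dist_top_of_ne huv] at hdist
  exact SimpleGraph.dist_eq_one_iff_adj.mp (by exact_mod_cast hdist.symm)

variable (G) in
theorem transm_le_trMax (v : Fin n) : transm G v ≤ trMax G :=
  le_ciSup (Finite.bddAbove_range _) v

variable (G) in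
theorem exists_transm_eq_trMax [NeZero n] : ∃ v, transm G v = trMax G :=
  exists_eq_ciSup_of_finite

theorem trMax_top [NeZero n] : trMax (⊤ : SimpleGraph (Fin n)) = n - 1 := by
  simp [trMax, transm_top]

end Transmission

section DistLap

variable {n : ℕ} (G : SimpleGraph (Fin n))

theorem distLap_apply (u v : Fin n) :
    distLap G u v = (if u = v then transm G u else 0) - G.dist u v := by
  simp [distLap, diagonal_apply]

@[simp]
theorem distLap_apply_self (v : Fin n) : distLap G v v = transm G v := by
  simp [distLap_apply]

theorem distLap_isHermitian : (distLap G).IsHermitian := by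
  ext u v
  by_cases h : u = v <;> simp [distLap_apply, SimpleGraph.dist_comm, h, eq_comm]

theorem distLap_mulVec_one : distLap G *ᵥ 1 = 0 := by
  ext u
  simp [mulVec, dotProduct, distLap_apply, sum_sub_distrib, transm]

theorem one_vecMul_distLap : 1 ᵥ* distLap G = 0 := by
  rw [← mulVec_transpose, ← conjTranspose_eq_transpose_of_trivial, distLap_isHermitian,
    distLap_mulVec_one]

theorem trace_distLap : (distLap G).trace = ∑ v, transm G v := by
  simp [trace]

theorem trace_distLap_sq : (distLap G ^ 2).trace = R1 G := by
  have hentry : ∀ u v, distLap G u v * distLap G v u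
      = (if u = v then transm G u ^ 2 else 0) + (G.dist u v : ℝ) ^ 2 := by
    intro u v
    by_cases h : u = v
    · simp [h, sq]
    · simp [h, Ne.symm h, distLap_apply, SimpleGraph.dist_comm, sq]
  rw [sq]
  simp only [trace, diag_apply, mul_apply, hentry, sum_add_distrib, sum_ite_eq, mem_univ,
    if_true, R1]
  rw [sum_sum_eq_two_nsmul_sum_sum_lt (f := fun u v => (G.dist u v : ℝ) ^ 2)
    (fun u v => by rw [SimpleGraph.dist_comm]) (fun u => by simp), nsmul_eq_mul, Nat.cast_ofNat]

theorem nonneg_of_mem_spectrum_distLap {t : ℝ} (ht : t ∈ spectrum ℝ (distLap G)) : 0 ≤ t := by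
  refine nonneg_of_mem_spectrum_of_diagDominant (fun k => le_of_eq ?_) ht
  have hoff : ∀ j ∈ univ.erase k, |distLap G k j| = G.dist k j := fun j hj => by
    simp [distLap_apply, Ne.symm (ne_of_mem_erase hj)]
  rw [sum_congr rfl hoff, sum_erase _ (by simp), distLap_apply_self, transm]

theorem mul_transm_le_of_spectrum_distLap_le {c : ℝ} (hc : ∀ t ∈ spectrum ℝ (distLap G), t ≤ c)
    (v : Fin n) : n * transm G v ≤ c * (n - 1) := by
  have hq := (distLap_isHermitian G).dotProduct_mulVec_le_of_spectrum_le hc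
    ((n : ℝ) • Pi.single v 1 - 1)
  rw [smul_single_sub_one_dotProduct_mulVec (distLap_mulVec_one G) (one_vecMul_distLap G)] at hq
  have hnorm : ((n : ℝ) • Pi.single v 1 - 1 : Fin n → ℝ) ⬝ᵥ ((n : ℝ) • Pi.single v 1 - 1)
      = n ^ 2 - n := by
    simp [sub_dotProduct, dotProduct_sub]
    ring
  rw [hnorm, distLap_apply_self] at hq
  have hn : (0 : ℝ) < n := by exact_mod_cast v.pos
  refine le_of_mul_le_mul_left ?_ hn
  linarith

end DistLap

section Spectrum

variable {n : ℕ} {G : SimpleGraph (Fin n)} {μ : Fin n → ℝ}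

theorem IsDLSpec.sum_eq (hμ : IsDLSpec G μ) : ∑ i, μ i = ∑ v, transm G v := by
  rw [← trace_eq_sum_of_charpoly_eq_prod hμ, trace_distLap]

theorem IsDLSpec.sum_sq_eq (hμ : IsDLSpec G μ) : ∑ i, μ i ^ 2 = R1 G := by
  rw [← trace_distLap_sq, ← cfc_pow_id (R := ℝ) (distLap G) 2 (distLap_isHermitian G)]
  exact (trace_eq_sum_of_charpoly_eq_prod
    ((distLap_isHermitian G).charpoly_cfc_eq_of_charpoly_eq_prod hμ (· ^ 2))).symm

theorem one_add_trMax_le_of_spectrum_distLap_le (hG : G.Connected) (hn : 2 ≤ n) {c : ℝ}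
    (hc : ∀ t ∈ spectrum ℝ (distLap G), t ≤ c) : 1 + trMax G ≤ c := by
  have : NeZero n := ⟨by omega⟩
  obtain ⟨v, hv⟩ := exists_transm_eq_trMax G
  have hrayleigh := mul_transm_le_of_spectrum_distLap_le G hc v
  have hconn := transm_top_le_transm hG v
  rw [transm_top] at hconn
  have hn' : (0 : ℝ) < n - 1 := sub_pos.mpr (by exact_mod_cast hn)
  rw [← hv]
  refine le_of_mul_le_mul_left ?_ hn'
  nlinarith

theorem eq_top_of_spectrum_distLap_le_one_add_trMax (hG : G.Connected)
    (hc : ∀ t ∈ spectrum ℝ (distLap G), t ≤ 1 + trMax G) : G = ⊤ := by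
  refine eq_top_of_transm_le_transm_top hG fun v => ?_
  have : NeZero n := ⟨v.pos.ne'⟩
  obtain ⟨w, hw⟩ := exists_transm_eq_trMax G
  have hrayleigh := mul_transm_le_of_spectrum_distLap_le G hc w
  rw [hw] at hrayleigh
  rw [transm_top]
  nlinarith [transm_le_trMax G v]

theorem distLap_top : distLap (⊤ : SimpleGraph (Fin n)) = (n : ℝ) • 1 - of fun _ _ => 1 := by
  ext u v
  by_cases h : u = v <;> simp [distLap_apply, transm_top, h, SimpleGraph.dist_top_of_ne]

theorem distLap_top_mul_self :
    distLap (⊤ : SimpleGraph (Fin n)) * distLap ⊤ = (n : ℝ) • distLap ⊤ := by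
  have hJ : (of fun _ _ => 1 : Matrix (Fin n) (Fin n) ℝ) * (of fun _ _ => 1)
      = (n : ℝ) • of fun _ _ => 1 := by
    ext; simp [mul_apply]
  rw [distLap_top]
  simp only [sub_mul, mul_sub, smul_mul_assoc, mul_smul_comm, one_mul, mul_one, hJ]
  module

theorem eq_zero_or_eq_of_mem_spectrum_distLap_top [NeZero n] {t : ℝ}
    (ht : t ∈ spectrum ℝ (distLap (⊤ : SimpleGraph (Fin n)))) : t = 0 ∨ t = n := by
  have := spectrum.mul_self_eq_of_mul_self_eq_smul distLap_top_mul_self ht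
  rcases mul_eq_zero.mp (show t * (t - n) = 0 by linarith) with h | h
  · exact .inl h
  · exact .inr (by linarith)

end Spectrum

theorem IsDLSpec.spread_top_eq {n : ℕ} (hn : 2 < n) {μ : Fin n → ℝ}
    (hμ : IsDLSpec (⊤ : SimpleGraph (Fin n)) μ) (hmono : Antitone μ) :
    μ ⟨0, by omega⟩ - μ ⟨n - 2, by omega⟩ = 1 + trMax (⊤ : SimpleGraph (Fin n)) -
      √((R1 (⊤ : SimpleGraph (Fin n)) - (1 + trMax (⊤ : SimpleGraph (Fin n))) ^ 2) / (n - 2)) := by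
  have : NeZero n := ⟨by omega⟩
  have hn' : (2 : ℝ) < n := by exact_mod_cast hn
  have hvals : ∀ i, μ i = 0 ∨ μ i = n := fun i => eq_zero_or_eq_of_mem_spectrum_distLap_top
    (spectrum_eq_range_of_charpoly_eq_prod hμ ▸ ⟨i, rfl⟩)
  have hsum : ∑ i, μ i = n * (n - 1) := by
    simp [hμ.sum_eq, transm_top]
    ring
  have hR1 : R1 (⊤ : SimpleGraph (Fin n)) = n ^ 2 * (n - 1) := calc
    _ = ∑ i, μ i ^ 2 := hμ.sum_sq_eq.symm
    _ = ∑ i, n * μ i := sum_congr rfl fun i _ => by rcases hvals i with h | h <;> simp [h, sq]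
    _ = _ := by rw [← mul_sum, hsum]; ring
  have hpen : μ ⟨n - 2, by omega⟩ = n := by
    refine (hvals _).resolve_left fun hzero => ?_
    have hlast : μ ⟨n - 1, by omega⟩ ≤ 0 := hzero ▸ hmono (Fin.mk_le_mk.mpr (by omega))
    have hsplit := add_add_card_sub_two_mul_le_sum (f := fun i => -μ i)
      (a := ⟨n - 2, by omega⟩) (b := ⟨n - 1, by omega⟩) (by simp [Fin.ext_iff]; omega)
      (c := -n) fun i _ _ => by rcases hvals i with h | h <;> simp [h]
    simp only [Fintype.card_fin, sum_neg_distrib, hsum, hzero] at hsplit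
    nlinarith
  have hfirst : μ ⟨0, by omega⟩ = n := (hvals _).resolve_left fun hzero => by
    have := hmono (Fin.mk_le_mk.mpr (by omega) : (⟨0, by omega⟩ : Fin n) ≤ ⟨n - 2, by omega⟩)
    linarith
  have hquot : ((n : ℝ) ^ 2 * (n - 1) - (1 + (n - 1)) ^ 2) / (n - 2) = n ^ 2 := by
    rw [div_eq_iff (by linarith)]
    ring
  rw [trMax_top, hR1, hpen, hfirst, hquot, Real.sqrt_sq (by positivity)]
  ring

theorem dls_lower_R1_trMax (n : ℕ) (hn : 3 ≤ n) (G : SimpleGraph (Fin n))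
    (hG : G.Connected) (μ : Fin n → ℝ) (hμ : IsDLSpec G μ) (hmono : Antitone μ) :
    1 + trMax G - Real.sqrt ((R1 G - (1 + trMax G) ^ 2) / ((n : ℝ) - 2))
      ≤ μ ⟨0, by omega⟩ - μ ⟨n - 2, by omega⟩ ∧
    (μ ⟨0, by omega⟩ - μ ⟨n - 2, by omega⟩
        = 1 + trMax G - Real.sqrt ((R1 G - (1 + trMax G) ^ 2) / ((n : ℝ) - 2))
      ↔ G = ⊤) := by
  have hspec := spectrum_eq_range_of_charpoly_eq_prod hμ
  have hnonneg : ∀ i, 0 ≤ μ i := fun i => nonneg_of_mem_spectrum_distLap G (hspec ▸ ⟨i, rfl⟩)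
  have hmax : ∀ t ∈ spectrum ℝ (distLap G), t ≤ μ ⟨0, by omega⟩ := by
    rw [hspec]
    rintro _ ⟨i, rfl⟩
    exact hmono (Fin.le_def.mpr (Nat.zero_le _))
  have hfirst := one_add_trMax_le_of_spectrum_distLap_le hG (by omega) hmax
  have htrMax : 0 ≤ trMax G :=
    (sum_nonneg fun _ _ => Nat.cast_nonneg _).trans (transm_le_trMax G ⟨0, by omega⟩)
  have hpen := penultimate_le_sqrt_of_antitone (by omega) hmono hnonneg (by linarith) hfirst
  rw [hμ.sum_sq_eq] at hpen
  refine ⟨by linarith, fun heq => ?_, ?_⟩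
  · exact eq_top_of_spectrum_distLap_le_one_add_trMax hG fun t ht =>
      (hmax t ht).trans (by linarith)
  · rintro rfl
    exact hμ.spread_top_eq (by omega) hmono
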